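/- Let k ∈ ℕ_+ and λ̲ ∈ ℝ_+^k be fully supercritical (λ^{∖i} := Σ_{j≠i} λ_j > 1 for all i∈[k]). Then the vector (p_I)_{I⊆[k]}, where p_∅ = 0 and p_I = P(there exists i∈I such that the root of an edge-colored Poisson branching process tree with color intensity vector λ̲ is i-avoiding connected to infinity), is the unique relevant solution of the system x_∅ = 0, x_I = 1 − exp(−Σ_{j∈I} λ_j x_{I∖{j}} − x_I Σ_{j∈[k]∖I} λ_j) for all nonempty I ⊆ [k]; that is, it is the unique solution satisfying 0 < x_I < 1 for every nonempty I ⊆ [k]. -/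

import Mathlib

open MeasureTheory ProbabilityTheory Filter

namespace CAP

/-- Ulam–Harris labels for the edge-colored branching-process tree: a vertex is a list of
(color, index-among-siblings-of-that-color) pairs, read from the vertex back to the root. -/
abbrev Vtx (k : ℕ) := List (Fin k × ℕ)

/-- Membership in the branching-process tree determined by the offspring configuration `c`,
where `c v i` is the number of children of `v` attached by an edge of color `i`. -/
def inTree {k : ℕ} (c : Vtx k → Fin k → ℕ) : Vtx k → Prop
  | [] => True
  | q :: v => inTree c v ∧ q.2 < c v q.1

/-- `v` is `i`-avoiding connected to infinity: there is an infinite path of descendants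
starting at `v` using no edge of color `i`. -/
def avoidInf {k : ℕ} (c : Vtx k → Fin k → ℕ) (i : Fin k) (v : Vtx k) : Prop :=
  ∃ f : ℕ → Vtx k, f 0 = v ∧ ∀ m : ℕ,
    inTree c (f (m + 1)) ∧ ∃ q : Fin k × ℕ, q.1 ≠ i ∧ f (m + 1) = q :: f m

/-- The root and the vertex `v` are `i`-avoiding friends: either the (unique) path from the
root to `v` uses no edge of color `i`, or both are `i`-avoiding connected to infinity. -/
def iFriend {k : ℕ} (c : Vtx k → Fin k → ℕ) (i : Fin k) (v : Vtx k) : Prop :=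
  (∀ q ∈ v, Prod.fst q ≠ i) ∨ (avoidInf c i ([] : Vtx k) ∧ avoidInf c i v)

/-- The set of (color-avoiding) friends of the root in the branching-process tree. -/
def friendSet {k : ℕ} (c : Vtx k → Fin k → ℕ) : Set (Vtx k) :=
  {v | inTree c v ∧ ∀ i : Fin k, iFriend c i v}

/-- `X v i` (the numbers of color-`i` children of `v`) form an independent family of
Poisson(`lam i`) random variables: the edge-colored Poisson branching process tree. -/
structure IsECBP {k : ℕ} {Ω : Type*} [MeasurableSpace Ω] (μ : Measure Ω)
    (lam : Fin k → ℝ) (X : Vtx k → Fin k → Ω → ℕ) : Prop where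
  isProb : IsProbabilityMeasure μ
  meas : ∀ v i, Measurable (X v i)
  indep : iIndepFun (m := fun _ : Vtx k × Fin k => (inferInstance : MeasurableSpace ℕ))
    (fun p : Vtx k × Fin k => X p.1 p.2) μ
  poisson : ∀ v i m, μ {ω | X v i ω = m}
    = ENNReal.ofReal (Real.exp (-(lam i)) * (lam i) ^ m / m.factorial)

/-- The `i`-avoiding graph of a colored edge configuration `c` on `Fin n`:
`x` and `y` are adjacent if they are joined by an edge of some color `j ≠ i`. -/
def avoidGraph {k n : ℕ} (c : Fin k → Sym2 (Fin n) → Bool) (i : Fin k) :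
    SimpleGraph (Fin n) where
  Adj x y := x ≠ y ∧ ∃ j : Fin k, j ≠ i ∧ c j s(x, y) = true
  symm := ⟨by
    rintro x y ⟨hxy, j, hj, hc⟩
    exact ⟨hxy.symm, j, hj, by rwa [Sym2.eq_swap] at hc⟩⟩
  loopless := ⟨fun x h => h.1 rfl⟩

/-- The color-avoiding connected component of `v`. -/
def caComp {k n : ℕ} (c : Fin k → Sym2 (Fin n) → Bool) (v : Fin n) : Set (Fin n) :=
  {w | ∀ i : Fin k, (avoidGraph c i).Reachable v w}

/-- The edge-colored Erdős–Rényi multigraph `𝒢_n(V, λ)` on vertex set `Fin n`: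
independent colored edge indicators, an edge of color `i` being present with probability
`1 - exp (- lam i / n)`. -/
structure IsECER {k : ℕ} {Ω : Type*} [MeasurableSpace Ω] (μ : Measure Ω) (n : ℕ)
    (lam : Fin k → ℝ) (E : Fin k → Sym2 (Fin n) → Ω → Bool) : Prop where
  isProb : IsProbabilityMeasure μ
  meas : ∀ i e, Measurable (E i e)
  indep : iIndepFun (m := fun _ : Fin k × Sym2 (Fin n) => (inferInstance : MeasurableSpace Bool))
    (fun p : Fin k × Sym2 (Fin n) => E p.1 p.2) μ
  prob : ∀ i e, ¬ e.IsDiag →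
    μ {ω | E i e ω = true} = ENNReal.ofReal (1 - Real.exp (-(lam i) / n))
  noDiag : ∀ i e, e.IsDiag → ∀ ω, E i e ω = false


/-- A solution of the system of equations
`x_∅ = 0`, `x_I = 1 − exp(−Σ_{j∈I} λ_j x_{I∖{j}} − x_I·Σ_{j∉I} λ_j)` (for nonempty `I`),
which moreover satisfies `0 < x_I < 1` for every nonempty `I ⊆ [k]`. -/
def IsRelevantSolution {k : ℕ} (lam : Fin k → ℝ) (x : Finset (Fin k) → ℝ) : Prop :=
  x ∅ = 0 ∧
  (∀ I : Finset (Fin k), I.Nonempty →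
    x I = 1 - Real.exp (-(∑ j ∈ I, lam j * x (I.erase j)) - x I * ∑ j ∈ Iᶜ, lam j)) ∧
  (∀ I : Finset (Fin k), I.Nonempty → 0 < x I ∧ x I < 1)

/-!
Write `q_n(I)` for the probability that for no colour `i ∈ I` the root has an `i`-avoiding path
of length `n`. Splitting at the first generation, independence of the subtrees and the Poisson
generating function give `q_{n+1}(I) = ∏_j exp (-λ_j (1 - q_n(I ∖ {j})))`, and by König's lemma
`q_n(I) ↑ 1 - p_I`; passing to the limit yields the system. The singleton case reduces to the
one-type recursion `q ↦ exp (-Λ (1 - q))` with `Λ = λ^{∖i} > 1`, whose iterates stay below its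
fixed point `t < 1`, so `p_I ≥ p_{{i}} ≥ 1 - t > 0`. Uniqueness goes by induction on `|I|`: once
the values on the sets `I ∖ {j}` are fixed, the equation for `x_I` reads
`x = 1 - exp (-C - x D)` with `C, D ≥ 0`, which by strict convexity of `exp` has at most one
positive root.
-/

section AvoidingPaths

variable {k : ℕ} {c : Vtx k → Fin k → ℕ} {i : Fin k}

def HasAvoidPath (c : Vtx k → Fin k → ℕ) (i : Fin k) : ℕ → Vtx k → Prop
  | 0, _ => True
  | n + 1, v => ∃ q : Fin k × ℕ, q.1 ≠ i ∧ q.2 < c v q.1 ∧ HasAvoidPath c i n (q :: v)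

lemma HasAvoidPath.of_succ :
    ∀ {n : ℕ} {v : Vtx k}, HasAvoidPath c i (n + 1) v → HasAvoidPath c i n v
  | 0, _, _ => trivial
  | _ + 1, _, ⟨q, hqi, hqc, hq⟩ => ⟨q, hqi, hqc, hq.of_succ⟩

lemma HasAvoidPath.mono {m n : ℕ} {v : Vtx k} (hmn : m ≤ n) (h : HasAvoidPath c i n v) :
    HasAvoidPath c i m v := by
  induction hmn with
  | refl => exact h
  | step _ ih => exact ih h.of_succ

/-- König's lemma: `v` has only finitely many children. -/
lemma exists_child_forall_hasAvoidPath {v : Vtx k} (h : ∀ n, HasAvoidPath c i n v) :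
    ∃ q : Fin k × ℕ, q.1 ≠ i ∧ q.2 < c v q.1 ∧ ∀ n, HasAvoidPath c i n (q :: v) := by
  classical
  by_contra! hfail
  choose! N hN using hfail
  let children := (Finset.univ : Finset (Fin k)) ×ˢ Finset.range (Finset.univ.sup (c v))
  obtain ⟨q, hqi, hqc, hq⟩ := h (children.sup N + 1)
  have hmem : q ∈ children :=
    Finset.mem_product.2 ⟨Finset.mem_univ _,
      Finset.mem_range.2 (hqc.trans_le (Finset.le_sup (Finset.mem_univ q.1)))⟩
  exact hN q hqi hqc (hq.mono (Finset.le_sup hmem))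

lemma avoidInf_iff_forall_hasAvoidPath {v : Vtx k} (hv : inTree c v) :
    avoidInf c i v ↔ ∀ n, HasAvoidPath c i n v := by
  constructor
  · rintro ⟨f, rfl, hf⟩
    suffices ∀ n m, HasAvoidPath c i n (f m) from fun n => this n 0
    intro n
    induction n with
    | zero => exact fun _ => trivial
    | succ n ih =>
      intro m
      obtain ⟨hin, q, hqi, hq⟩ := hf m
      rw [hq] at hin
      exact ⟨q, hqi, hin.2, hq ▸ ih (m + 1)⟩
  · intro h
    have : Nonempty (Fin k × ℕ) := ⟨(exists_child_forall_hasAvoidPath h).choose⟩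
    choose! next hne hlt hpath using
      fun w (hw : ∀ n, HasAvoidPath c i n w) => exists_child_forall_hasAvoidPath hw
    let f : ℕ → Vtx k := fun m => Nat.rec v (fun _ w => next w :: w) m
    have hf : ∀ m, inTree c (f m) ∧ ∀ n, HasAvoidPath c i n (f m) := by
      intro m
      induction m with
      | zero => exact ⟨hv, h⟩
      | succ m ih => exact ⟨⟨ih.1, hlt _ ih.2⟩, hpath _ ih.2⟩
    exact ⟨f, rfl, fun m => ⟨(hf (m + 1)).1, next (f m), hne _ (hf m).2, rfl⟩⟩

end AvoidingPaths

section Recursion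

variable {k : ℕ} {lam : Fin k → ℝ}

lemma tsum_ofReal_poisson_mul_pow {l x : ℝ} (hl : 0 ≤ l) (hx : 0 ≤ x) :
    ∑' m : ℕ, ENNReal.ofReal (Real.exp (-l) * l ^ m / m.factorial) * ENNReal.ofReal x ^ m
      = ENNReal.ofReal (Real.exp (-(l * (1 - x)))) := by
  have hterm : ∀ m : ℕ, ENNReal.ofReal (Real.exp (-l) * l ^ m / m.factorial) * ENNReal.ofReal x ^ m
      = ENNReal.ofReal (Real.exp (-l) * ((l * x) ^ m / m.factorial)) := by
    intro m
    rw [← ENNReal.ofReal_pow hx, ← ENNReal.ofReal_mul (by positivity), mul_pow]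
    ring_nf
  have hsum : HasSum (fun m : ℕ => Real.exp (-l) * ((l * x) ^ m / m.factorial))
      (Real.exp (-(l * (1 - x)))) := by
    have h := (NormedSpace.expSeries_div_hasSum_exp (l * x)).mul_left (Real.exp (-l))
    rwa [← Real.exp_eq_exp_ℝ, ← Real.exp_add, show -l + l * x = -(l * (1 - x)) by ring] at h
  simp_rw [hterm]
  rw [← ENNReal.ofReal_tsum_of_nonneg (fun m => by positivity) hsum.summable, hsum.tsum_eq]

noncomputable def noAvoidPathProb (lam : Fin k → ℝ) : ℕ → Finset (Fin k) → ℝ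
  | 0, I => if I = ∅ then 1 else 0
  | n + 1, I => ∏ j, Real.exp (-(lam j * (1 - noAvoidPathProb lam n (I.erase j))))

lemma noAvoidPathProb_nonneg : ∀ (n : ℕ) (I : Finset (Fin k)), 0 ≤ noAvoidPathProb lam n I
  | 0, I => by unfold noAvoidPathProb; split_ifs <;> norm_num
  | n + 1, I => by unfold noAvoidPathProb; positivity

lemma noAvoidPathProb_empty : ∀ n : ℕ, noAvoidPathProb lam n ∅ = 1
  | 0 => by simp [noAvoidPathProb]
  | n + 1 => by simp [noAvoidPathProb, noAvoidPathProb_empty n]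

lemma noAvoidPathProb_le_of_subset (hlam : ∀ j, 0 ≤ lam j) :
    ∀ (n : ℕ) {I J : Finset (Fin k)}, I ⊆ J → noAvoidPathProb lam n J ≤ noAvoidPathProb lam n I
  | 0, I, J, hIJ => by
    unfold noAvoidPathProb
    split_ifs with hJ hI
    · rfl
    · exact absurd (Finset.subset_empty.1 (hJ ▸ hIJ)) hI
    all_goals norm_num
  | n + 1, I, J, hIJ => by
    unfold noAvoidPathProb
    gcongr with j
    · exact hlam j
    · exact noAvoidPathProb_le_of_subset hlam n (Finset.erase_subset_erase j hIJ)

lemma noAvoidPathProb_succ_singleton (n : ℕ) (i : Fin k) :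
    noAvoidPathProb lam (n + 1) {i} =
      Real.exp (-((∑ j ∈ Finset.univ.erase i, lam j) * (1 - noAvoidPathProb lam n {i}))) := by
  rw [noAvoidPathProb, ← Finset.mul_prod_erase _ _ (Finset.mem_univ i), Finset.erase_singleton,
    noAvoidPathProb_empty, sub_self, mul_zero, neg_zero, Real.exp_zero, one_mul, Finset.sum_mul,
    ← Finset.sum_neg_distrib, Real.exp_sum]
  refine Finset.prod_congr rfl fun j hj => ?_
  rw [Finset.erase_eq_of_notMem (by simpa using Finset.ne_of_mem_erase hj)]

lemma noAvoidPathProb_singleton_le (hlam : ∀ j, 0 ≤ lam j) {i : Fin k} {t : ℝ} (ht : 0 ≤ t)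
    (hfix : Real.exp (-((∑ j ∈ Finset.univ.erase i, lam j) * (1 - t))) = t) (n : ℕ) :
    noAvoidPathProb lam n {i} ≤ t := by
  induction n with
  | zero => simpa [noAvoidPathProb] using ht
  | succ n ih =>
    rw [noAvoidPathProb_succ_singleton, ← hfix]
    gcongr
    exact Finset.sum_nonneg fun j _ => hlam j

end Recursion

section System

open Topology

variable {k : ℕ} {lam : Fin k → ℝ}

lemma exists_exp_fixedPoint_lt_one {Λ : ℝ} (hΛ : 1 < Λ) :
    ∃ t, 0 ≤ t ∧ t < 1 ∧ Real.exp (-(Λ * (1 - t))) = t := by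
  have hΛ0 : 0 < Λ := by linarith
  have hcont : ContinuousOn (fun t : ℝ => Real.exp (-(Λ * (1 - t))) - t) (Set.Icc 0 Λ⁻¹) := by
    fun_prop
  have hend : Real.exp (-(Λ * (1 - Λ⁻¹))) - Λ⁻¹ ≤ 0 := by
    have hexp : Λ < Real.exp (Λ - 1) := by
      linarith [Real.add_one_lt_exp (by linarith : Λ - 1 ≠ 0)]
    rw [show -(Λ * (1 - Λ⁻¹)) = -(Λ - 1) by field_simp, Real.exp_neg, sub_nonpos]
    exact (inv_strictAnti₀ hΛ0 hexp).le
  obtain ⟨t, ⟨ht0, htΛ⟩, ht⟩ :=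
    intermediate_value_Icc' (inv_nonneg.2 hΛ0.le) hcont ⟨hend, by simp [Real.exp_nonneg]⟩
  exact ⟨t, ht0, htΛ.trans_lt (inv_lt_one_of_one_lt₀ hΛ), by linarith [ht]⟩

lemma eq_of_fixedPoint_one_sub_exp {C D a b : ℝ} (hC : 0 ≤ C) (hD : 0 ≤ D) (ha : 0 < a)
    (hb : 0 < b) (hA : a = 1 - Real.exp (-C - a * D)) (hB : b = 1 - Real.exp (-C - b * D)) :
    a = b := by
  wlog hab : a < b generalizing a b
  · rcases (not_lt.1 hab).eq_or_lt with h | h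
    · exact h.symm
    · exact (this hb ha hB hA h).symm
  rcases hD.eq_or_lt with rfl | hD
  · rw [hA, hB, mul_zero, mul_zero]
  exfalso
  set θ := a / b
  have hθb : θ * b = a := div_mul_cancel₀ a hb.ne'
  have hθ0 : 0 < θ := div_pos ha hb
  have hθ1 : θ < 1 := (div_lt_one hb).2 hab
  have hconv := strictConvexOn_exp.2 (Set.mem_univ (-C)) (Set.mem_univ (-C - b * D))
    (by nlinarith) (by linarith : 0 < 1 - θ) hθ0 (by ring)
  simp only [smul_eq_mul] at hconv
  rw [show (1 - θ) * -C + θ * (-C - b * D) = -C - a * D by rw [← hθb]; ring] at hconv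
  have hexpC : Real.exp (-C) ≤ 1 := Real.exp_le_one_iff.2 (by linarith)
  nlinarith [mul_le_mul_of_nonneg_left hexpC (by linarith : 0 ≤ 1 - θ)]

lemma sum_mul_erase_eq (y : Finset (Fin k) → ℝ) (I : Finset (Fin k)) :
    ∑ j, lam j * y (I.erase j) = ∑ j ∈ I, lam j * y (I.erase j) + y I * ∑ j ∈ Iᶜ, lam j := by
  rw [← Finset.sum_add_sum_compl I, Finset.mul_sum]
  congr 1
  refine Finset.sum_congr rfl fun j hj => ?_
  rw [Finset.erase_eq_of_notMem (Finset.mem_compl.1 hj), mul_comm]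

lemma one_sub_eq_prod_exp_of_tendsto {p : Finset (Fin k) → ℝ}
    (hp : ∀ I, Tendsto (fun n => noAvoidPathProb lam n I) atTop (𝓝 (1 - p I)))
    (I : Finset (Fin k)) :
    1 - p I = ∏ j, Real.exp (-(lam j * p (I.erase j))) := by
  have hlim := tendsto_finsetProd Finset.univ fun j _ =>
    ((by fun_prop : Continuous fun t => Real.exp (-(lam j * (1 - t)))).tendsto _).comp
      (hp (I.erase j))
  simp only [sub_sub_cancel] at hlim
  exact tendsto_nhds_unique ((hp I).comp (tendsto_add_atTop_nat 1)) hlim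

lemma isRelevantSolution_of_tendsto (hlam : ∀ j, 0 ≤ lam j)
    (hsup : ∀ i : Fin k, 1 < ∑ j ∈ Finset.univ.erase i, lam j) {p : Finset (Fin k) → ℝ}
    (hp : ∀ I, Tendsto (fun n => noAvoidPathProb lam n I) atTop (𝓝 (1 - p I))) :
    IsRelevantSolution lam p := by
  have hfix := one_sub_eq_prod_exp_of_tendsto hp
  refine ⟨?_, fun I _ => ?_, fun I ⟨i, hi⟩ => ⟨?_, ?_⟩⟩
  · have h1 : Tendsto (fun n => noAvoidPathProb lam n ∅) atTop (𝓝 1) := by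
      simp only [noAvoidPathProb_empty, tendsto_const_nhds]
    linarith [tendsto_nhds_unique (hp ∅) h1]
  · have h := hfix I
    rw [← Real.exp_sum, Finset.sum_neg_distrib, sum_mul_erase_eq, neg_add'] at h
    linarith
  · obtain ⟨t, ht0, ht1, hfix_t⟩ := exists_exp_fixedPoint_lt_one (hsup i)
    have hsingle : 1 - p {i} ≤ t :=
      le_of_tendsto' (hp {i}) (noAvoidPathProb_singleton_le hlam ht0 hfix_t)
    have hmono : 1 - p I ≤ 1 - p {i} := le_of_tendsto_of_tendsto' (hp I) (hp {i})
      fun n => noAvoidPathProb_le_of_subset hlam n (Finset.singleton_subset_iff.2 hi)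
    linarith
  · have : 0 < 1 - p I := hfix I ▸ by positivity
    linarith

lemma IsRelevantSolution.nonneg {x : Finset (Fin k) → ℝ} (hx : IsRelevantSolution lam x)
    (I : Finset (Fin k)) : 0 ≤ x I := by
  rcases I.eq_empty_or_nonempty with rfl | hI
  · exact hx.1.ge
  · exact (hx.2.2 I hI).1.le

lemma IsRelevantSolution.eq (hlam : ∀ j, 0 ≤ lam j) {x y : Finset (Fin k) → ℝ}
    (hx : IsRelevantSolution lam x) (hy : IsRelevantSolution lam y) : x = y := by
  funext I
  induction I using Finset.strongInduction with
  | H I ih =>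
    rcases I.eq_empty_or_nonempty with rfl | hI
    · exact hx.1.trans hy.1.symm
    have hxI := hx.2.1 I hI
    rw [Finset.sum_congr rfl fun j hj => by rw [ih _ (Finset.erase_ssubset hj)]] at hxI
    exact eq_of_fixedPoint_one_sub_exp
      (Finset.sum_nonneg fun j _ => mul_nonneg (hlam j) (hy.nonneg _))
      (Finset.sum_nonneg fun j _ => hlam j) (hx.2.2 I hI).1 (hy.2.2 I hI).1 hxI (hy.2.1 I hI)

end System

section Blocks

open Function

variable {ι Ω β : Type*} [mβ : MeasurableSpace β] (Y : ι → Ω → β)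

abbrev blockMS (S : Set ι) : MeasurableSpace Ω := ⨆ i ∈ S, mβ.comap (Y i)

variable {Y}

lemma blockMS_mono {S T : Set ι} (h : S ⊆ T) : blockMS Y S ≤ blockMS Y T :=
  biSup_mono h

lemma measurableSet_blockMS_preimage {S : Set ι} {i : ι} (hi : i ∈ S) {s : Set β}
    (hs : MeasurableSet s) : MeasurableSet[blockMS Y S] (Y i ⁻¹' s) :=
  le_biSup (fun i => mβ.comap (Y i)) hi _ ⟨s, hs, rfl⟩

variable [MeasurableSpace Ω] {μ : Measure Ω}

lemma blockMS_le (hY : ∀ i, Measurable (Y i)) (S : Set ι) : blockMS Y S ≤ ‹MeasurableSpace Ω› :=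
  iSup₂_le fun i _ => (hY i).comap_le

lemma indep_blockMS (hY : ∀ i, Measurable (Y i)) (hind : iIndepFun Y μ) {S T : Set ι}
    (hST : Disjoint S T) : Indep (blockMS Y S) (blockMS Y T) μ :=
  indep_iSup_of_disjoint (fun i => (hY i).comap_le)
    ((iIndepFun_iff_iIndep (fun _ => mβ) Y μ).1 hind) hST

lemma measure_biInter_eq_prod_of_disjoint [IsProbabilityMeasure μ] (hY : ∀ i, Measurable (Y i))
    (hind : iIndepFun Y μ) {γ : Type*} {T : γ → Set ι} (hT : Pairwise (Disjoint on T))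
    {A : γ → Set Ω} (hA : ∀ c, MeasurableSet[blockMS Y (T c)] (A c)) (s : Finset γ) :
    μ (⋂ c ∈ s, A c) = ∏ c ∈ s, μ (A c) := by
  classical
  induction s using Finset.induction with
  | empty => simp
  | insert a s ha ih =>
    have hdisj : Disjoint (T a) (⋃ c ∈ s, T c) :=
      Set.disjoint_iUnion₂_right.2 fun c hc => hT fun h => ha (h ▸ hc)
    have hmeas : MeasurableSet[blockMS Y (⋃ c ∈ s, T c)] (⋂ c ∈ s, A c) :=
      .biInter s.countable_toSet fun c hc => blockMS_mono (Set.subset_biUnion_of_mem hc) _ (hA c)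
    rw [Finset.set_biInter_insert, Finset.prod_insert ha, ← ih,
      (Indep_iff _ _ μ).1 (indep_blockMS hY hind hdisj) _ _ (hA a) hmeas]

end Blocks

section TreeEvents

open Function

variable {k : ℕ}

def subtreeCoords (v : Vtx k) : Set (Vtx k × Fin k) := {p | v <:+ p.1}

lemma subtreeCoords_cons_subset (q : Fin k × ℕ) (v : Vtx k) :
    subtreeCoords (q :: v) ⊆ subtreeCoords v :=
  fun _ hp => (List.suffix_cons q v).trans hp

lemma disjoint_subtreeCoords_cons {q q' : Fin k × ℕ} (h : q ≠ q') (v : Vtx k) :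
    Disjoint (subtreeCoords (q :: v)) (subtreeCoords (q' :: v)) :=
  Set.disjoint_left.2 fun _ hp hp' =>
    h (List.cons.inj ((List.suffix_of_suffix_length_le hp hp' le_rfl).eq_of_length rfl)).1

lemma notMem_subtreeCoords_cons (q : Fin k × ℕ) (v : Vtx k) (j : Fin k) :
    (v, j) ∉ subtreeCoords (q :: v) :=
  fun h => by simpa using h.length_le

def childBlock (v : Vtx k) (j : Fin k) : Set (Vtx k × Fin k) :=
  insert (v, j) (⋃ m : ℕ, subtreeCoords ((j, m) :: v))

lemma pairwise_disjoint_childBlock (v : Vtx k) : Pairwise (Disjoint on childBlock v) := by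
  intro j j' hjj'
  simp only [onFun, childBlock, Set.disjoint_insert_left, Set.disjoint_insert_right,
    Set.mem_insert_iff, Set.mem_iUnion, Set.disjoint_iUnion_left, Set.disjoint_iUnion_right,
    Prod.mk.injEq, true_and, not_or, not_exists]
  exact ⟨⟨Ne.symm hjj', fun _ => notMem_subtreeCoords_cons _ v j⟩, fun _ =>
    ⟨notMem_subtreeCoords_cons _ v j', fun _ => disjoint_subtreeCoords_cons (by simp [hjj']) v⟩⟩

end TreeEvents

section BranchingProcess

open Function Topology

variable {k : ℕ} {Ω : Type*} (X : Vtx k → Fin k → Ω → ℕ)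

def avoidPathSet (i : Fin k) (n : ℕ) (v : Vtx k) : Set Ω :=
  {ω | HasAvoidPath (fun u j => X u j ω) i n v}

def noAvoidPathSet (I : Finset (Fin k)) (n : ℕ) (v : Vtx k) : Set Ω :=
  ⋂ i ∈ I, (avoidPathSet X i n v)ᶜ

lemma avoidPathSet_succ (i : Fin k) (n : ℕ) (v : Vtx k) :
    avoidPathSet X i (n + 1) v =
      ⋃ (q : Fin k × ℕ) (_ : q.1 ≠ i), {ω | q.2 < X v q.1 ω} ∩ avoidPathSet X i n (q :: v) := by
  ext ω
  simp only [avoidPathSet, HasAvoidPath, Set.mem_ofPred_eq, Set.mem_iUnion, Set.mem_inter_iff,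
    exists_prop]

lemma measurableSet_avoidPathSet (i : Fin k) :
    ∀ (n : ℕ) (v : Vtx k),
      MeasurableSet[blockMS (uncurry X) (subtreeCoords v)] (avoidPathSet X i n v)
  | 0, v => by simp [avoidPathSet, HasAvoidPath]
  | n + 1, v => by
    rw [avoidPathSet_succ]
    refine .iUnion fun q => .iUnion fun _ => .inter ?_ ?_
    · exact measurableSet_blockMS_preimage (i := (v, q.1)) (List.suffix_refl v) measurableSet_Ioi
    · exact blockMS_mono (subtreeCoords_cons_subset q v) _ (measurableSet_avoidPathSet i n (q :: v))

lemma measurableSet_noAvoidPathSet (I : Finset (Fin k)) (n : ℕ) (v : Vtx k) :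
    MeasurableSet[blockMS (uncurry X) (subtreeCoords v)] (noAvoidPathSet X I n v) :=
  .biInter I.countable_toSet fun i _ => (measurableSet_avoidPathSet X i n v).compl

lemma noAvoidPathSet_succ (I : Finset (Fin k)) (n : ℕ) (v : Vtx k) :
    noAvoidPathSet X I (n + 1) v = ⋂ j, ⋃ m : ℕ, {ω | X v j ω = m} ∩
      ⋂ m' ∈ Finset.range m, noAvoidPathSet X (I.erase j) n ((j, m') :: v) := by
  ext ω
  simp only [noAvoidPathSet, avoidPathSet_succ, Set.mem_iInter, Set.mem_compl_iff,
    Set.mem_iUnion, Set.mem_inter_iff, Set.mem_ofPred_eq, Finset.mem_erase, Finset.mem_range]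
  constructor
  · rintro hω j
    exact ⟨X v j ω, rfl, fun m' hm' i ⟨hij, hi⟩ hpath =>
      hω i hi ⟨(j, m'), Ne.symm hij, ⟨hm', hpath⟩⟩⟩
  · rintro hω i hi ⟨q, hqi, hq, hpath⟩
    obtain ⟨m, hm, hsub⟩ := hω q.1
    exact hsub q.2 (hm ▸ hq) i ⟨Ne.symm hqi, hi⟩ hpath

lemma iUnion_noAvoidPathSet_nil (I : Finset (Fin k)) :
    ⋃ n, noAvoidPathSet X I n [] = {ω | ∃ i ∈ I, avoidInf (fun v j => X v j ω) i []}ᶜ := by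
  ext ω
  simp only [noAvoidPathSet, avoidPathSet, Set.mem_iUnion, Set.mem_iInter, Set.mem_compl_iff,
    Set.mem_ofPred_eq, avoidInf_iff_forall_hasAvoidPath (c := fun v j => X v j ω) (v := []) trivial,
    not_exists, not_and]
  constructor
  · rintro ⟨n, hn⟩ i hi hall
    exact hn i hi (hall n)
  · intro h
    simp only [not_forall] at h
    choose! N hN using h
    exact ⟨I.sup N, fun i hi hpath => hN i hi (hpath.mono (Finset.le_sup hi))⟩

variable [MeasurableSpace Ω] {μ : Measure Ω} {lam : Fin k → ℝ} {X}

lemma IsECBP.measurable_uncurry (hX : IsECBP μ lam X) (p : Vtx k × Fin k) :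
    Measurable (uncurry X p) :=
  hX.meas p.1 p.2

lemma measure_count_inter_noAvoidPathSet (hX : IsECBP μ lam X) (v : Vtx k) (j : Fin k) (m : ℕ)
    (J : Finset (Fin k)) (n : ℕ) :
    μ ({ω | X v j ω = m} ∩ ⋂ m' ∈ Finset.range m, noAvoidPathSet X J n ((j, m') :: v)) =
      μ {ω | X v j ω = m} * ∏ m' ∈ Finset.range m, μ (noAvoidPathSet X J n ((j, m') :: v)) := by
  have := hX.isProb
  have hdisj : Disjoint {(v, j)} (⋃ m' : ℕ, subtreeCoords ((j, m') :: v)) :=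
    Set.disjoint_singleton_left.2 <| Set.mem_iUnion.not.2 <| not_exists.2 fun _ =>
      notMem_subtreeCoords_cons _ v j
  have hcount : MeasurableSet[blockMS (uncurry X) {(v, j)}] {ω | X v j ω = m} :=
    measurableSet_blockMS_preimage (Set.mem_singleton _) (measurableSet_singleton m)
  have hsub : MeasurableSet[blockMS (uncurry X) (⋃ m' : ℕ, subtreeCoords ((j, m') :: v))]
      (⋂ m' ∈ Finset.range m, noAvoidPathSet X J n ((j, m') :: v)) :=
    .biInter (Finset.range m).countable_toSet fun m' _ =>
      blockMS_mono (Set.subset_iUnion _ m') _ (measurableSet_noAvoidPathSet X J n _)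
  rw [(Indep_iff _ _ μ).1 (indep_blockMS hX.measurable_uncurry hX.indep hdisj) _ _ hcount hsub,
    measure_biInter_eq_prod_of_disjoint hX.measurable_uncurry hX.indep
      (T := fun m' => subtreeCoords ((j, m') :: v))
      (fun a b hab => disjoint_subtreeCoords_cons (by simpa using hab) v)
      (fun m' => measurableSet_noAvoidPathSet X J n _)]

lemma measure_iUnion_count_inter_noAvoidPathSet (hX : IsECBP μ lam X) {j : Fin k}
    (hlam : 0 ≤ lam j) {J : Finset (Fin k)} {n : ℕ}
    (hJ : ∀ w, μ (noAvoidPathSet X J n w) = ENNReal.ofReal (noAvoidPathProb lam n J))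
    (v : Vtx k) :
    μ (⋃ m : ℕ, {ω | X v j ω = m} ∩
        ⋂ m' ∈ Finset.range m, noAvoidPathSet X J n ((j, m') :: v)) =
      ENNReal.ofReal (Real.exp (-(lam j * (1 - noAvoidPathProb lam n J)))) := by
  have hmeas : ∀ m : ℕ, MeasurableSet ({ω | X v j ω = m} ∩
      ⋂ m' ∈ Finset.range m, noAvoidPathSet X J n ((j, m') :: v)) := fun m =>
    (hX.meas v j (measurableSet_singleton m)).inter <| .biInter (Finset.range m).countable_toSet
      fun m' _ => blockMS_le hX.measurable_uncurry _ _ (measurableSet_noAvoidPathSet X J n _)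
  rw [measure_iUnion (fun a b hab => Set.disjoint_left.2 fun ω ha hb => hab (ha.1.symm.trans hb.1))
    hmeas, ← tsum_ofReal_poisson_mul_pow hlam (noAvoidPathProb_nonneg n J)]
  refine tsum_congr fun m => ?_
  rw [measure_count_inter_noAvoidPathSet hX, hX.poisson, Finset.prod_congr rfl fun _ _ => hJ _,
    Finset.prod_const, Finset.card_range]

lemma measure_noAvoidPathSet (hX : IsECBP μ lam X) (hlam : ∀ j, 0 ≤ lam j) :
    ∀ (n : ℕ) (I : Finset (Fin k)) (v : Vtx k),
      μ (noAvoidPathSet X I n v) = ENNReal.ofReal (noAvoidPathProb lam n I)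
  | 0, I, v => by
    have := hX.isProb
    rcases I.eq_empty_or_nonempty with rfl | ⟨i, hi⟩
    · simp [noAvoidPathSet, noAvoidPathProb]
    · have hempty : noAvoidPathSet X I 0 v = ∅ :=
        Set.eq_empty_of_forall_notMem fun ω hω => Set.mem_iInter₂.1 hω i hi trivial
      simp [hempty, noAvoidPathProb, Finset.ne_empty_of_mem hi]
  | n + 1, I, v => by
    have hA : ∀ j, MeasurableSet[blockMS (uncurry X) (childBlock v j)]
        (⋃ m : ℕ, {ω | X v j ω = m} ∩
          ⋂ m' ∈ Finset.range m, noAvoidPathSet X (I.erase j) n ((j, m') :: v)) := fun j =>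
      .iUnion fun m => .inter
        (measurableSet_blockMS_preimage (Set.mem_insert _ _) (measurableSet_singleton m))
        (.biInter (Finset.range m).countable_toSet fun m' _ =>
          blockMS_mono ((Set.subset_iUnion _ m').trans (Set.subset_insert _ _)) _
            (measurableSet_noAvoidPathSet X _ n _))
    have := hX.isProb
    have h := measure_biInter_eq_prod_of_disjoint (μ := μ) hX.measurable_uncurry hX.indep
      (pairwise_disjoint_childBlock v) hA Finset.univ
    simp only [Finset.mem_univ, Set.iInter_true] at h
    rw [noAvoidPathSet_succ, h, noAvoidPathProb,
      ENNReal.ofReal_prod_of_nonneg fun j _ => (Real.exp_pos _).le]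
    exact Finset.prod_congr rfl fun j _ => measure_iUnion_count_inter_noAvoidPathSet hX (hlam j)
      (measure_noAvoidPathSet hX hlam n (I.erase j)) v

lemma tendsto_noAvoidPathProb (hX : IsECBP μ lam X) (hlam : ∀ j, 0 ≤ lam j)
    (I : Finset (Fin k)) :
    Tendsto (fun n => noAvoidPathProb lam n I) atTop
      (𝓝 (1 - (μ {ω | ∃ i ∈ I, avoidInf (fun v j => X v j ω) i []}).toReal)) := by
  have := hX.isProb
  have hmono : Monotone fun n => noAvoidPathSet X I n [] := fun a b hab ω hω =>
    Set.mem_iInter₂.2 fun i hi hpath => Set.mem_iInter₂.1 hω i hi (HasAvoidPath.mono hab hpath)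
  have hU : MeasurableSet (⋃ n, noAvoidPathSet X I n []) := .iUnion fun n =>
    blockMS_le hX.measurable_uncurry _ _ (measurableSet_noAvoidPathSet X I n [])
  have hlim := (ENNReal.tendsto_toReal (measure_ne_top μ _)).comp
    (tendsto_measure_iUnion_atTop (μ := μ) hmono)
  rw [iUnion_noAvoidPathSet_nil] at hU hlim
  rw [prob_compl_eq_one_sub hU.of_compl, ENNReal.toReal_sub_of_le prob_le_one ENNReal.one_ne_top,
    ENNReal.toReal_one] at hlim
  refine hlim.congr fun n => ?_
  rw [comp_apply, comp_apply, measure_noAvoidPathSet hX hlam,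
    ENNReal.toReal_ofReal (noAvoidPathProb_nonneg n I)]

end BranchingProcess

theorem pI_unique_relevantSolution_general
    {k : ℕ} (lam : Fin k → ℝ) (hpos : ∀ i, 0 < lam i)
    (hsup : ∀ i : Fin k, 1 < ∑ j ∈ Finset.univ.erase i, lam j)
    {Ω' : Type*} [MeasurableSpace Ω'] (μ' : Measure Ω')
    (X : Vtx k → Fin k → Ω' → ℕ) (hX : IsECBP μ' lam X)
    (p : Finset (Fin k) → ℝ)
    (hp : ∀ I : Finset (Fin k),
      p I = (μ' {ω' : Ω' |
        ∃ i ∈ I, avoidInf (fun v j => X v j ω') i ([] : Vtx k)}).toReal) :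
    IsRelevantSolution lam p ∧
      ∀ x : Finset (Fin k) → ℝ, IsRelevantSolution lam x → x = p := by
  have hlam : ∀ j, 0 ≤ lam j := fun j => (hpos j).le
  have hrel : IsRelevantSolution lam p := isRelevantSolution_of_tendsto hlam hsup fun I => by
    rw [hp I]
    exact tendsto_noAvoidPathProb hX hlam I
  exact ⟨hrel, fun x hx => hx.eq hlam hrel⟩

/-- If `λ` is fully supercritical, then the probability vector
`(p_I)_{I ⊆ [k]}`, `p_I := P(∃ i ∈ I, the root of the edge-colored Poisson branching process
tree is i-avoiding connected to infinity)`, is the unique relevant solution of the system. -/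
theorem pI_unique_relevantSolution
    {k : ℕ} (hk : 1 ≤ k) (lam : Fin k → ℝ) (hpos : ∀ i, 0 < lam i)
    (hsup : ∀ i : Fin k, 1 < ∑ j ∈ Finset.univ.erase i, lam j)
    {Ω' : Type*} [MeasurableSpace Ω'] (μ' : Measure Ω')
    (X : Vtx k → Fin k → Ω' → ℕ) (hX : IsECBP μ' lam X)
    (p : Finset (Fin k) → ℝ)
    (hp : ∀ I : Finset (Fin k),
      p I = (μ' {ω' : Ω' |
        ∃ i ∈ I, avoidInf (fun v j => X v j ω') i ([] : Vtx k)}).toReal) :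
    IsRelevantSolution lam p ∧
      ∀ x : Finset (Fin k) → ℝ, IsRelevantSolution lam x → x = p :=
  pI_unique_relevantSolution_general lam hpos hsup μ' X hX p hp

end CAP
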